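/- Let Φ : ℝ³ → ℂ³ with I := ∫_{ℝ³} |ξ| |𝓕Φ(ξ)| dξ < ∞, let k ∈ ℝ³, Ψ(x) = 𝓟(e^{ik·x}Φ(x)), and let χ_Q(ξ) = χ(2^{−(Q+1)}ξ) with χ smooth compactly supported so that χ² has Lipschitz constant c. Then sup_x |(S_Q² Ψ)(x) − χ_Q(k)² Ψ(x)| ≤ (c/(2π)³) · I / 2^{Q+1}. -/

import Mathlib

open MeasureTheory Metric Function
open scoped RealInnerProductSpace

noncomputable section

abbrev E3 := EuclideanSpace ℝ (Fin 3)
abbrev C3 := EuclideanSpace ℂ (Fin 3)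

def toC3 (ξ : E3) : C3 := WithLp.toLp 2 (fun j => (ξ j : ℂ))

/-- Bilinear (non-Hermitian) dot product of `v ∈ ℂ³` with `ξ ∈ ℝ³`. -/
def dotRC (v : C3) (ξ : E3) : ℂ := ∑ j, v j * (ξ j : ℂ)

/-- The projection `P⊥_ξ v = v − |ξ|⁻²(v·ξ)ξ`. -/
def Pperp (ξ : E3) (v : C3) : C3 :=
  v - (((‖ξ‖ : ℂ) ^ 2)⁻¹ * dotRC v ξ) • toC3 ξ

/-- Fourier transform with the convention `𝓕f(ξ) = ∫ e^{-i x·ξ} f(x) dx`. -/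
def FT (Φ : E3 → C3) (ξ : E3) : C3 :=
  ∫ x : E3, Complex.exp (-(Complex.I * (⟪x, ξ⟫ : ℝ))) • Φ x

/-- `Ψ = 𝓟(e^{ik·x}Φ)`: the Leray projection, computed as the inverse Fourier
transform (convention `f(x) = (2π)^{-3} ∫ e^{i x·ξ} 𝓕f(ξ) dξ`) of
`ξ ↦ P⊥_ξ 𝓕(e^{ik·}Φ)(ξ)`. -/
def lerayMod (k : E3) (Φ : E3 → C3) (x : E3) : C3 :=
  ((2 * Real.pi) ^ 3)⁻¹ •
    ∫ ξ : E3, Complex.exp (Complex.I * (⟪x, ξ⟫ : ℝ)) •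
      Pperp ξ (FT (fun y => Complex.exp (Complex.I * (⟪k, y⟫ : ℝ)) • Φ y) ξ)


/-- `S_Q² Ψ`: the Fourier multiplier with symbol `χ_Q(ξ)² = χ(2^{-(Q+1)}ξ)²` applied to
`Ψ = 𝓟(e^{ik·x}Φ)`. -/
def lowPassSqLerayMod (χ : E3 → ℝ) (Q : ℕ) (k : E3) (Φ : E3 → C3) (x : E3) : C3 :=
  ((2 * Real.pi) ^ 3)⁻¹ •
    ∫ ξ : E3, Complex.exp (Complex.I * (⟪x, ξ⟫ : ℝ)) •
      ((χ ((((2:ℝ) ^ (Q + 1))⁻¹) • ξ)) ^ 2 •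
        Pperp ξ (FT (fun y => Complex.exp (Complex.I * (⟪k, y⟫ : ℝ)) • Φ y) ξ))

lemma dotRC_eq_inner (v : C3) (ξ : E3) : dotRC v ξ = @inner ℂ _ _ (toC3 ξ) v := by
  rw [PiLp.inner_apply]
  unfold dotRC toC3
  congr 1; funext j
  simp [mul_comm]

lemma norm_toC3 (ξ : E3) : ‖toC3 ξ‖ = ‖ξ‖ := by
  rw [EuclideanSpace.norm_eq, EuclideanSpace.norm_eq]
  congr 1; congr 1; funext j
  simp [toC3]

lemma pperp_norm_le (ξ : E3) (v : C3) : ‖Pperp ξ v‖ ≤ ‖v‖ := by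
  rcases eq_or_ne ξ 0 with h | h
  · subst h
    have h0 : toC3 (0 : E3) = 0 := by ext j; simp [toC3]
    simp [Pperp, h0]
  · have hξ : (0:ℝ) < ‖ξ‖ := norm_pos_iff.2 h
    set u : C3 := toC3 ξ with hu
    set d : ℂ := @inner ℂ _ _ u v with hd
    have hnu : ‖u‖ = ‖ξ‖ := norm_toC3 ξ
    have key : ‖Pperp ξ v‖ ^ 2 ≤ ‖v‖ ^ 2 := by
      unfold Pperp
      rw [dotRC_eq_inner, ← hu, ← hd]
      have hco : (((‖ξ‖ : ℂ) ^ 2)⁻¹ * d) • u = ((((‖ξ‖^2)⁻¹ : ℝ) : ℂ) * d) • u := by push_cast; ring_nf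
      rw [hco]
      have h2 := @norm_sub_sq ℂ C3 _ _ _ v (((((‖ξ‖^2)⁻¹ : ℝ) : ℂ) * d) • u)
      rw [h2]
      have hinner : @inner ℂ _ _ v (((((‖ξ‖^2)⁻¹ : ℝ) : ℂ) * d) • u)
          = ((((‖ξ‖^2)⁻¹ : ℝ) : ℂ)) * (d * @inner ℂ _ _ v u) := by
        rw [inner_smul_right]; ring
      have hvu : @inner ℂ _ _ v u = starRingEnd ℂ d := by rw [hd, ← inner_conj_symm]
      have hdd : d * starRingEnd ℂ d = (Complex.normSq d : ℂ) := by
        rw [Complex.mul_conj]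
      have hre : RCLike.re (@inner ℂ _ _ v (((((‖ξ‖^2)⁻¹ : ℝ) : ℂ) * d) • u))
          = (‖ξ‖^2)⁻¹ * Complex.normSq d := by
        rw [hinner, hvu, hdd, ← Complex.ofReal_mul]
        exact Complex.ofReal_re _
      have hns : ‖(((((‖ξ‖^2)⁻¹ : ℝ) : ℂ) * d) • u)‖ ^ 2 = ((‖ξ‖^2)⁻¹)^2 * Complex.normSq d * ‖ξ‖^2 := by
        have hd2 : ‖d‖^2 = Complex.normSq d := by
          rw [Complex.normSq_eq_norm_sq]
        rw [norm_smul, hnu, mul_pow, norm_mul, Complex.norm_real, Real.norm_eq_abs,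
          abs_of_nonneg (by positivity), mul_pow, hd2]
      rw [hre, hns]
      have : ((‖ξ‖^2)⁻¹)^2 * Complex.normSq d * ‖ξ‖^2 = (‖ξ‖^2)⁻¹ * Complex.normSq d := by
        field_simp
      rw [this]
      nlinarith [Complex.normSq_nonneg d, inv_nonneg.2 (sq_nonneg ‖ξ‖), mul_nonneg (inv_nonneg.2 (sq_nonneg ‖ξ‖)) (Complex.normSq_nonneg d)]
    nlinarith [norm_nonneg (Pperp ξ v), norm_nonneg v]

lemma FT_mod (Φ : E3 → C3) (k ξ : E3) :
    FT (fun y => Complex.exp (Complex.I * (⟪k, y⟫ : ℝ)) • Φ y) ξ = FT Φ (ξ - k) := by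
  unfold FT
  congr 1; funext x
  rw [smul_smul, ← Complex.exp_add]
  congr 2
  rw [inner_sub_right, real_inner_comm k x]
  push_cast
  ring

lemma norm_exp_I_real (t : ℝ) : ‖Complex.exp (Complex.I * (t:ℝ))‖ = 1 := by
  rw [Complex.norm_exp]
  simp

lemma norm_exp_neg_I_real (t : ℝ) : ‖Complex.exp (-(Complex.I * (t:ℝ)))‖ = 1 := by
  rw [Complex.norm_exp]
  simp

lemma FT_continuous {Φ : E3 → C3} (hΦ : Integrable Φ) : Continuous (FT Φ) := by
  apply MeasureTheory.continuous_of_dominated (bound := fun x => ‖Φ x‖)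
  · intro ξ
    apply AEStronglyMeasurable.smul (f := fun a : E3 => Complex.exp (-(Complex.I * (⟪a, ξ⟫ : ℝ)))) (g := Φ) _ hΦ.aestronglyMeasurable
    apply Continuous.aestronglyMeasurable
    exact Complex.continuous_exp.comp (continuous_const.mul
      (Complex.continuous_ofReal.comp (continuous_id.inner continuous_const))).neg
  · intro ξ
    filter_upwards with x
    rw [norm_smul, norm_exp_neg_I_real]
    simp
  · exact hΦ.norm
  · filter_upwards with x
    exact (Complex.continuous_exp.comp (continuous_const.mul
      (Complex.continuous_ofReal.comp (continuous_const.inner continuous_id))).neg).smul continuous_const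

lemma FT_norm_le {Φ : E3 → C3} (hΦ : Integrable Φ) (ξ : E3) :
    ‖FT Φ ξ‖ ≤ ∫ x, ‖Φ x‖ := by
  refine (norm_integral_le_integral_norm _).trans ?_
  refine le_of_eq (integral_congr_ae ?_)
  filter_upwards with x
  rw [norm_smul, norm_exp_neg_I_real, one_mul]

lemma FT_integrable {Φ : E3 → C3} (hΦ : Integrable Φ)
    (hI : Integrable fun ξ : E3 => ‖ξ‖ * ‖FT Φ ξ‖) : Integrable (FT Φ) := by
  set M : ℝ := ∫ x, ‖Φ x‖ with hM
  have hM0 : 0 ≤ M := integral_nonneg fun x => norm_nonneg _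
  refine Integrable.mono' (g := fun ξ : E3 =>
    (Metric.ball (0:E3) 1).indicator (fun _ => M) ξ + ‖ξ‖ * ‖FT Φ ξ‖) ?_ ?_ ?_
  · refine Integrable.add ?_ hI
    exact (integrableOn_const measure_ball_lt_top.ne).integrable_indicator
      measurableSet_ball
  · exact (FT_continuous hΦ).aestronglyMeasurable
  · filter_upwards with ξ
    rcases lt_or_ge ‖ξ‖ 1 with h | h
    · have : (Metric.ball (0:E3) 1).indicator (fun _ => M) ξ = M := by
        rw [Set.indicator_of_mem]
        simpa [mem_ball, dist_zero_right] using h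
      rw [this]
      have := FT_norm_le hΦ ξ
      nlinarith [norm_nonneg ξ, norm_nonneg (FT Φ ξ)]
    · have h2 : ‖FT Φ ξ‖ ≤ ‖ξ‖ * ‖FT Φ ξ‖ := le_mul_of_one_le_left (norm_nonneg _) h
      have h3 : (0:ℝ) ≤ (Metric.ball (0:E3) 1).indicator (fun _ => M) ξ :=
        Set.indicator_nonneg (fun _ _ => hM0) ξ
      linarith

lemma continuous_toC3 : Continuous toC3 := by
  unfold toC3
  exact (PiLp.continuous_toLp 2 _).comp (continuous_pi fun j => Complex.continuous_ofReal.comp (PiLp.continuous_apply 2 _ j))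

lemma pperp_comp_meas {g : E3 → C3} (hg : Continuous g) :
    AEStronglyMeasurable (fun ξ => Pperp ξ (g ξ)) (volume : Measure E3) := by
  unfold Pperp
  have hcoef : Measurable fun ξ : E3 => ((‖ξ‖ : ℂ) ^ 2)⁻¹ * dotRC (g ξ) ξ := by
    apply Measurable.mul
    · exact (((Complex.continuous_ofReal.comp continuous_norm).pow 2).measurable).inv
    · unfold dotRC
      apply Finset.measurable_sum
      intro j _
      exact ((PiLp.continuous_apply 2 _ j).comp hg).measurable.mul
        (Complex.continuous_ofReal.comp (PiLp.continuous_apply 2 _ j)).measurable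
  exact hg.aestronglyMeasurable.sub
    (hcoef.aestronglyMeasurable.smul continuous_toC3.aestronglyMeasurable)

theorem lowpass_leray_pointwise_estimate (Φ : E3 → C3) (k : E3)
    (hΦ : Integrable Φ)
    (hI : Integrable fun ξ : E3 => ‖ξ‖ * ‖FT Φ ξ‖)
    (χ : E3 → ℝ) (hχsmooth : ContDiff ℝ (⊤ : ℕ∞) χ) (hχsupp : HasCompactSupport χ)
    (c : ℝ) (hc : ∀ ξ η : E3, |χ ξ ^ 2 - χ η ^ 2| ≤ c * ‖ξ - η‖) (Q : ℕ) :
    ∀ x : E3,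
      ‖lowPassSqLerayMod χ Q k Φ x -
          (χ ((((2:ℝ) ^ (Q + 1))⁻¹) • k)) ^ 2 • lerayMod k Φ x‖ ≤
        (c / (2 * Real.pi) ^ 3) * (∫ ξ : E3, ‖ξ‖ * ‖FT Φ ξ‖) / (2:ℝ) ^ (Q + 1) := by
  intro x
  unfold lowPassSqLerayMod lerayMod
  simp only [FT_mod]
  set s : ℝ := ((2:ℝ) ^ (Q + 1))⁻¹ with hs
  have hs0 : 0 < s := by positivity
  set a : ℝ := χ (s • k) ^ 2 with ha
  have ha0 : 0 ≤ a := sq_nonneg _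
  set g : E3 → C3 := fun ξ => FT Φ (ξ - k) with hg
  have hgcont : Continuous g := (FT_continuous hΦ).comp (continuous_id.sub continuous_const)
  have hgint : Integrable g := (FT_integrable hΦ hI).comp_sub_right k
  have hIk : Integrable (fun ξ : E3 => ‖ξ - k‖ * ‖FT Φ (ξ - k)‖) :=
    (hI.comp_sub_right k : _)
  set F : E3 → C3 := fun ξ => Pperp ξ (g ξ) with hF
  have hFmeas : AEStronglyMeasurable F (volume : Measure E3) := pperp_comp_meas hgcont
  have hFbound : ∀ ξ, ‖F ξ‖ ≤ ‖g ξ‖ := fun ξ => pperp_norm_le ξ (g ξ)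
  have hexp : Continuous fun ξ : E3 => Complex.exp (Complex.I * (⟪x, ξ⟫ : ℝ)) :=
    Complex.continuous_exp.comp (continuous_const.mul
      (Complex.continuous_ofReal.comp (continuous_const.inner continuous_id)))
  set B : E3 → C3 := fun ξ => Complex.exp (Complex.I * (⟪x, ξ⟫ : ℝ)) • F ξ with hB
  have hBnorm : ∀ ξ, ‖B ξ‖ = ‖F ξ‖ := by
    intro ξ
    rw [hB, norm_smul, norm_exp_I_real, one_mul]
  have hBint : Integrable B := by
    refine Integrable.mono' hgint.norm (hexp.aestronglyMeasurable.smul hFmeas) ?_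
    filter_upwards with ξ
    rw [hBnorm ξ]
    exact hFbound ξ
  set A : E3 → C3 := fun ξ => Complex.exp (Complex.I * (⟪x, ξ⟫ : ℝ)) •
      ((χ (s • ξ)) ^ 2 • F ξ) with hA
  have hχdiff : ∀ ξ : E3, |χ (s • ξ) ^ 2 - a| ≤ c * s * ‖ξ - k‖ := by
    intro ξ
    have := hc (s • ξ) (s • k)
    rw [← smul_sub, norm_smul, Real.norm_eq_abs, abs_of_pos hs0] at this
    calc |χ (s • ξ) ^ 2 - a| ≤ c * (s * ‖ξ - k‖) := this
    _ = c * s * ‖ξ - k‖ := by ring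
  have hχcont : Continuous fun ξ : E3 => (χ (s • ξ)) ^ 2 :=
    (hχsmooth.continuous.comp (continuous_const_smul s)).pow 2
  have hAint : Integrable A := by
    refine Integrable.mono'
      ((hgint.norm.const_mul a).add (hIk.const_mul (c * s)))
      (hexp.aestronglyMeasurable.smul (hχcont.aestronglyMeasurable.smul hFmeas)) ?_
    filter_upwards with ξ
    rw [hA]
    simp only
    rw [norm_smul, norm_exp_I_real, one_mul, norm_smul, Real.norm_eq_abs,
      abs_of_nonneg (sq_nonneg _)]
    have h1 : χ (s • ξ) ^ 2 ≤ a + c * s * ‖ξ - k‖ := by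
      have := hχdiff ξ
      have := abs_le.1 this
      linarith [this.2]
    have h2 : ‖F ξ‖ ≤ ‖g ξ‖ := hFbound ξ
    have h3 : (0:ℝ) ≤ ‖F ξ‖ := norm_nonneg _
    have h4 : (0:ℝ) ≤ a + c * s * ‖ξ - k‖ := le_trans (sq_nonneg _) h1
    calc χ (s • ξ) ^ 2 * ‖F ξ‖ ≤ (a + c * s * ‖ξ - k‖) * ‖g ξ‖ := by
          exact mul_le_mul h1 h2 h3 h4
    _ = a * ‖g ξ‖ + c * s * (‖ξ - k‖ * ‖FT Φ (ξ - k)‖) := by rw [hg]; ring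
  have hpt : ∀ ξ : E3, ‖A ξ - a • B ξ‖ ≤ c * s * (‖ξ - k‖ * ‖FT Φ (ξ - k)‖) := by
    intro ξ
    have heq : A ξ - a • B ξ = Complex.exp (Complex.I * (⟪x, ξ⟫ : ℝ)) •
        ((χ (s • ξ) ^ 2 - a) • F ξ) := by
      rw [hA, hB]
      simp only
      rw [smul_comm a, ← smul_sub, sub_smul]
    rw [heq, norm_smul, norm_exp_I_real, one_mul, norm_smul, Real.norm_eq_abs]
    calc |χ (s • ξ) ^ 2 - a| * ‖F ξ‖ ≤ (c * s * ‖ξ - k‖) * ‖g ξ‖ :=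
          mul_le_mul (hχdiff ξ) (hFbound ξ) (norm_nonneg _)
            ((abs_nonneg _).trans (hχdiff ξ))
    _ = c * s * (‖ξ - k‖ * ‖FT Φ (ξ - k)‖) := by rw [hg]; ring
  have hrw : (∫ ξ, A ξ) - a • (∫ ξ, B ξ) = ∫ ξ, (A ξ - a • B ξ) := by
    rw [← integral_smul]
    exact (integral_sub hAint (hBint.smul a)).symm
  have hle : ‖∫ ξ, (A ξ - a • B ξ)‖ ≤ ∫ ξ : E3, c * s * (‖ξ - k‖ * ‖FT Φ (ξ - k)‖) :=
    norm_integral_le_of_norm_le (hIk.const_mul (c * s)) (ae_of_all _ hpt)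
  have hval : (∫ ξ : E3, c * s * (‖ξ - k‖ * ‖FT Φ (ξ - k)‖))
      = c * s * ∫ ξ : E3, ‖ξ‖ * ‖FT Φ ξ‖ := by
    rw [MeasureTheory.integral_const_mul]
    congr 1
    exact integral_sub_right_eq_self (fun ξ : E3 => ‖ξ‖ * ‖FT Φ ξ‖) k
  have hgoal : (((2 * Real.pi) ^ 3)⁻¹ • ∫ ξ, A ξ) - a • (((2 * Real.pi) ^ 3)⁻¹ • ∫ ξ, B ξ)
      = ((2 * Real.pi) ^ 3)⁻¹ • ∫ ξ, (A ξ - a • B ξ) := by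
    rw [smul_comm a, ← smul_sub, hrw]
  calc ‖(((2 * Real.pi) ^ 3)⁻¹ • ∫ ξ, A ξ) - a • (((2 * Real.pi) ^ 3)⁻¹ • ∫ ξ, B ξ)‖
      = ((2 * Real.pi) ^ 3)⁻¹ * ‖∫ ξ, (A ξ - a • B ξ)‖ := by
        rw [hgoal, norm_smul, Real.norm_eq_abs, abs_of_pos (by positivity)]
    _ ≤ ((2 * Real.pi) ^ 3)⁻¹ * (c * s * ∫ ξ : E3, ‖ξ‖ * ‖FT Φ ξ‖) := by
        rw [← hval]
        exact mul_le_mul_of_nonneg_left hle (by positivity)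
    _ = (c / (2 * Real.pi) ^ 3) * (∫ ξ : E3, ‖ξ‖ * ‖FT Φ ξ‖) / (2:ℝ) ^ (Q + 1) := by
        rw [hs]
        ring

end
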